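/- Let d ≥ 1, let v, w : ℝ^d → ℝ^d be continuously differentiable and compactly supported with div v = 0 everywhere, let φ : ℝ^d → ℝ and R : ℝ → ℝ be continuously differentiable, and set ρ := R∘φ. Then ∫_{ℝ^d} ρ ⟨(v·∇)v, w⟩ = −(1/2)∫_{ℝ^d} R′(φ)⟨v,∇φ⟩⟨v,w⟩ − (1/2)∫_{ℝ^d} ρ ⟨v,(∇w)^T v⟩ + (1/2)∫_{ℝ^d} ρ ⟨v,(∇v)^T w⟩. -/

import Mathlib

open MeasureTheory Set Matrix

noncomputable section

/-- Euclidean dot product on `Fin d → ℝ`. -/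
def dot {d : ℕ} (a b : Fin d → ℝ) : ℝ := ∑ i, a i * b i

/-- Spatial gradient of a scalar field. -/
def grad {d : ℕ} (f : (Fin d → ℝ) → ℝ) (x : Fin d → ℝ) : Fin d → ℝ :=
  fun i => fderiv ℝ f x (Pi.single i 1)

/-- Jacobian matrix `(∇v)_{ij} = ∂v_i/∂x_j` of a vector field. -/
def jac {d : ℕ} (v : (Fin d → ℝ) → Fin d → ℝ) (x : Fin d → ℝ) :
    Matrix (Fin d) (Fin d) ℝ := Matrix.of fun i j => fderiv ℝ v x (Pi.single j 1) i

/-- Divergence `div v = tr(∇v)` of a vector field. -/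
def divg {d : ℕ} (v : (Fin d → ℝ) → Fin d → ℝ) (x : Fin d → ℝ) : ℝ :=
  ∑ i, fderiv ℝ v x (Pi.single i 1) i

/-- Symmetrized gradient `Dv = (∇v + (∇v)ᵀ)/2`. -/
def symGrad {d : ℕ} (v : (Fin d → ℝ) → Fin d → ℝ) (x : Fin d → ℝ) :
    Matrix (Fin d) (Fin d) ℝ :=
  Matrix.of fun i j => (jac v x i j + jac v x j i) / 2

/-- Frobenius inner product of matrices. -/
def frob {d : ℕ} (A B : Matrix (Fin d) (Fin d) ℝ) : ℝ := ∑ i, ∑ j, A i j * B i j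

/-- Laplacian of a scalar field. -/
def lap {d : ℕ} (f : (Fin d → ℝ) → ℝ) (x : Fin d → ℝ) : ℝ :=
  ∑ i, fderiv ℝ (fun y => fderiv ℝ f y (Pi.single i 1)) x (Pi.single i 1)

/-- Affine mass density `ρ(s) = (ρ̂₂+ρ̂₁)/2 + (ρ̂₂-ρ̂₁)/2 · s`. -/
def rhoAff (ρ₁ ρ₂ s : ℝ) : ℝ := (ρ₂ + ρ₁) / 2 + (ρ₂ - ρ₁) / 2 * s

/-! For `F = ρ ⟨v, w⟩ v`, which is `C¹` with compact support, each `∫ ∂ᵢ Fᵢ` vanishes by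
integration by parts against the constant `1`, so `∫ div F = 0`. As `div v = 0`,
`div F = ⟨v, ∇(ρ ⟨v, w⟩)⟩ = R'(φ) ⟨v, ∇φ⟩ ⟨v, w⟩ + ρ ⟨v, (∇v)ᵀ w⟩ + ρ ⟨v, (∇w)ᵀ v⟩`,
and `⟨v, (∇v)ᵀ w⟩ = ⟨(∇v) v, w⟩`; the identity is half of `∫ div F = 0`, rearranged. -/

theorem ContinuousLinearMap.apply_eq_sum_smul_apply_single {ι M : Type*} [Fintype ι]
    [DecidableEq ι] [AddCommGroup M] [Module ℝ M] [TopologicalSpace M]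
    (f : (ι → ℝ) →L[ℝ] M) (u : ι → ℝ) : f u = ∑ i, u i • f (Pi.single i 1) := by
  conv_lhs => rw [pi_eq_sum_univ' u]
  simp only [map_sum, map_smul]

theorem HasCompactSupport.mono_of_eq_zero {X M N : Type*} [TopologicalSpace X] [Zero M] [Zero N]
    {f : X → M} {g : X → N} (hg : HasCompactSupport g) (h : ∀ x, g x = 0 → f x = 0) :
    HasCompactSupport f :=
  hg.mono fun x hfx hgx => hfx (h x hgx)

section IntegralFDeriv

variable {E F : Type*} [NormedAddCommGroup E] [NormedSpace ℝ E] [MeasurableSpace E]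
  [BorelSpace E] [NormedAddCommGroup F] [NormedSpace ℝ F] {μ : Measure E} {g : E → F}

theorem HasCompactSupport.integrable_fderiv_apply [IsFiniteMeasureOnCompacts μ]
    (hs : HasCompactSupport g) (hg : ContDiff ℝ 1 g) (u : E) :
    Integrable (fun x => fderiv ℝ g x u) μ :=
  ((hg.continuous_fderiv one_ne_zero).clm_apply continuous_const).integrable_of_hasCompactSupport
    (hs.fderiv_apply (𝕜 := ℝ) u)

theorem integral_fderiv_apply_eq_zero [FiniteDimensional ℝ E] [μ.IsAddHaarMeasure]
    (hg : ContDiff ℝ 1 g) (hs : HasCompactSupport g) (u : E) :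
    ∫ x, fderiv ℝ g x u ∂μ = 0 := by
  have key := integral_smul_fderiv_eq_neg_fderiv_smul_of_integrable (μ := μ)
    (f := fun _ => (1 : ℝ)) (g := g) (v := u) (by simp)
    (by simpa using hs.integrable_fderiv_apply hg u)
    (by simpa using hg.continuous.integrable_of_hasCompactSupport hs)
    (fun _ _ => differentiableAt_const _) (fun x _ => hg.differentiable one_ne_zero x)
  simpa using key

end IntegralFDeriv

section VectorCalculus

variable {d : ℕ}

theorem dot_comm (a b : Fin d → ℝ) : dot a b = dot b a :=
  dotProduct_comm a b

theorem dot_smul (a b : Fin d → ℝ) (c : ℝ) : dot a (c • b) = c * dot a b :=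
  dotProduct_smul c a b

theorem dot_transpose_mulVec (A : Matrix (Fin d) (Fin d) ℝ) (a b : Fin d → ℝ) :
    dot a (Aᵀ *ᵥ b) = dot (A *ᵥ a) b := by
  simp only [dot, ← dotProduct.eq_1]
  rw [dotProduct_mulVec, vecMul_transpose]

theorem dot_grad (f : (Fin d → ℝ) → ℝ) (x u : Fin d → ℝ) :
    dot u (grad f x) = fderiv ℝ f x u := by
  simp [dot, grad, (fderiv ℝ f x).apply_eq_sum_smul_apply_single u]

theorem jac_mulVec (v : (Fin d → ℝ) → Fin d → ℝ) (x u : Fin d → ℝ) :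
    jac v x *ᵥ u = fderiv ℝ v x u := by
  ext i
  simp [jac, mulVec, dotProduct, (fderiv ℝ v x).apply_eq_sum_smul_apply_single u, mul_comm]

@[fun_prop]
theorem Continuous.dot {X : Type*} [TopologicalSpace X] {a b : X → Fin d → ℝ}
    (ha : Continuous a) (hb : Continuous b) : Continuous fun x => dot (a x) (b x) :=
  ha.dotProduct hb

section

variable {E : Type*} [NormedAddCommGroup E] [NormedSpace ℝ E] {a b : E → Fin d → ℝ}

theorem DifferentiableAt.dot {x : E} (ha : DifferentiableAt ℝ a x)
    (hb : DifferentiableAt ℝ b x) : DifferentiableAt ℝ (fun y => dot (a y) (b y)) x :=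
  DifferentiableAt.fun_sum fun i _ =>
    (differentiableAt_pi.1 ha i).fun_mul (differentiableAt_pi.1 hb i)

theorem ContDiff.dot {n : WithTop ℕ∞} (ha : ContDiff ℝ n a) (hb : ContDiff ℝ n b) :
    ContDiff ℝ n (fun y => dot (a y) (b y)) :=
  ContDiff.sum fun i _ => (contDiff_pi.1 ha i).mul (contDiff_pi.1 hb i)

theorem fderiv_dot {x : E} (ha : DifferentiableAt ℝ a x) (hb : DifferentiableAt ℝ b x) (u : E) :
    fderiv ℝ (fun y => dot (a y) (b y)) x u =
      dot (fderiv ℝ a x u) (b x) + dot (a x) (fderiv ℝ b x u) := by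
  have hai := differentiableAt_pi.1 ha
  have hbi := differentiableAt_pi.1 hb
  simp only [dot]
  rw [fderiv_fun_sum (A := fun i y => a y i * b y i) fun i _ => (hai i).fun_mul (hbi i)]
  simp [fderiv_fun_mul (hai _) (hbi _), fderiv_apply ha, fderiv_apply hb, Finset.sum_add_distrib,
    add_comm, mul_comm]

end

theorem continuous_grad {f : (Fin d → ℝ) → ℝ} (hf : ContDiff ℝ 1 f) : Continuous (grad f) :=
  continuous_pi fun _ => (hf.continuous_fderiv one_ne_zero).clm_apply continuous_const

theorem continuous_jac {v : (Fin d → ℝ) → Fin d → ℝ} (hv : ContDiff ℝ 1 v) :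
    Continuous (jac v) :=
  continuous_pi fun i => continuous_pi fun _ =>
    (continuous_apply i).comp ((hv.continuous_fderiv one_ne_zero).clm_apply continuous_const)

variable {x : Fin d → ℝ}

theorem grad_comp {R : ℝ → ℝ} {φ : (Fin d → ℝ) → ℝ} (hR : DifferentiableAt ℝ R (φ x))
    (hφ : DifferentiableAt ℝ φ x) :
    grad (fun y => R (φ y)) x = deriv R (φ x) • grad φ x := by
  ext i
  simp [grad, fderiv_fun_comp x hR hφ, mul_comm]

theorem divg_smul {g : (Fin d → ℝ) → ℝ} {v : (Fin d → ℝ) → Fin d → ℝ}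
    (hg : DifferentiableAt ℝ g x) (hv : DifferentiableAt ℝ v x) :
    divg (fun y => g y • v y) x = dot (v x) (grad g x) + g x * divg v x := by
  simp [divg, fderiv_fun_smul hg hv, Finset.sum_add_distrib, Finset.mul_sum, dot, grad, mul_comm,
    add_comm]

theorem divg_mul_dot_smul {ρ : (Fin d → ℝ) → ℝ} {v w : (Fin d → ℝ) → Fin d → ℝ}
    (hρ : DifferentiableAt ℝ ρ x) (hv : DifferentiableAt ℝ v x) (hw : DifferentiableAt ℝ w x)
    (hdiv : divg v x = 0) :
    divg (fun y => (ρ y * dot (v y) (w y)) • v y) x =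
      dot (v x) (grad ρ x) * dot (v x) (w x) + ρ x * dot (jac v x *ᵥ v x) (w x)
        + ρ x * dot (v x) ((jac w x)ᵀ *ᵥ v x) := by
  rw [divg_smul (hρ.fun_mul (hv.dot hw)) hv, hdiv, mul_zero, add_zero, dot_grad, dot_grad,
    fderiv_fun_mul hρ (hv.dot hw)]
  simp only [_root_.add_apply, _root_.smul_apply, smul_eq_mul, fderiv_dot hv hw, jac_mulVec,
    dot_transpose_mulVec, dot_comm (fderiv ℝ w x (v x))]
  ring

theorem integral_divg_eq_zero {F : (Fin d → ℝ) → Fin d → ℝ} (hF : ContDiff ℝ 1 F)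
    (hs : HasCompactSupport F) : ∫ x, divg F x = 0 := by
  have hFi : ∀ i, ContDiff ℝ 1 (fun y => F y i) := contDiff_pi.mp hF
  have hsi : ∀ i, HasCompactSupport (fun y => F y i) := fun i => hs.mono_of_eq_zero fun y hy => by
    simp [hy]
  have hdivg : ∀ x, divg F x = ∑ i, fderiv ℝ (fun y => F y i) x (Pi.single i 1) := fun x => by
    simp [divg, fderiv_apply (hF.differentiable one_ne_zero x)]
  simp_rw [hdivg]
  rw [integral_finsetSum _ fun i _ => (hsi i).integrable_fderiv_apply (hFi i) _]
  exact Finset.sum_eq_zero fun i _ => integral_fderiv_apply_eq_zero (hFi i) (hsi i) _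

end VectorCalculus

theorem convective_term_identity_general
    {d : ℕ}
    (v w : (Fin d → ℝ) → Fin d → ℝ)
    (hv : ContDiff ℝ 1 v) (hw : ContDiff ℝ 1 w)
    (hvsupp : HasCompactSupport v)
    (hdiv : ∀ x, divg v x = 0)
    (φ : (Fin d → ℝ) → ℝ) (R : ℝ → ℝ)
    (hφ : ContDiff ℝ 1 φ) (hR : ContDiff ℝ 1 R) :
    (∫ x, R (φ x) * dot (Matrix.mulVec (jac v x) (v x)) (w x))
      = -(1/2) * (∫ x, deriv R (φ x) * dot (v x) (grad φ x) * dot (v x) (w x))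
        - (1/2) * (∫ x, R (φ x) * dot (v x) (Matrix.mulVec (jac w x)ᵀ (v x)))
        + (1/2) * (∫ x, R (φ x) * dot (v x) (Matrix.mulVec (jac v x)ᵀ (w x))) := by
  have hρ : ContDiff ℝ 1 fun y => R (φ y) := hR.comp hφ
  have hF : ContDiff ℝ 1 fun y => (R (φ y) * dot (v y) (w y)) • v y :=
    (hρ.mul (hv.dot hw)).smul hv
  have hFs : HasCompactSupport fun y => (R (φ y) * dot (v y) (w y)) • v y :=
    hvsupp.mono_of_eq_zero fun y hy => by simp [hy]
  have hdivF (x) : divg (fun y => (R (φ y) * dot (v y) (w y)) • v y) x =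
      deriv R (φ x) * dot (v x) (grad φ x) * dot (v x) (w x)
        + R (φ x) * dot (jac v x *ᵥ v x) (w x) + R (φ x) * dot (v x) ((jac w x)ᵀ *ᵥ v x) := by
    rw [divg_mul_dot_smul (hρ.differentiable one_ne_zero x) (hv.differentiable one_ne_zero x)
      (hw.differentiable one_ne_zero x) (hdiv x),
      grad_comp (hR.differentiable one_ne_zero _) (hφ.differentiable one_ne_zero x), dot_smul]
  have hint {f : (Fin d → ℝ) → ℝ} (hf : Continuous f) (h0 : ∀ x, v x = 0 → f x = 0) :
      Integrable f :=
    hf.integrable_of_hasCompactSupport (hvsupp.mono_of_eq_zero h0)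
  have hR' := hR.continuous_deriv le_rfl
  have hgradφ := continuous_grad hφ
  have hjacv := continuous_jac hv
  have hjacw := continuous_jac hw
  have hA : Integrable fun x => deriv R (φ x) * dot (v x) (grad φ x) * dot (v x) (w x) :=
    hint (by fun_prop) fun x hx => by simp [hx, dot]
  have hI : Integrable fun x => R (φ x) * dot (jac v x *ᵥ v x) (w x) :=
    hint (by fun_prop) fun x hx => by simp [hx, dot]
  have hB : Integrable fun x => R (φ x) * dot (v x) ((jac w x)ᵀ *ᵥ v x) :=
    hint (by fun_prop) fun x hx => by simp [hx, dot]
  have hsum := integral_divg_eq_zero hF hFs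
  simp_rw [hdivF] at hsum
  rw [integral_add (hA.fun_add hI) hB, integral_add hA hI] at hsum
  simp_rw [dot_transpose_mulVec (jac v _)]
  linarith

/-- Integral identity underlying the discretization (2.5) of the convective
term `ρ(v·∇)v` for solenoidal velocity fields. -/
theorem convective_term_identity
    {d : ℕ} (hd : 1 ≤ d)
    (v w : (Fin d → ℝ) → Fin d → ℝ)
    (hv : ContDiff ℝ 1 v) (hw : ContDiff ℝ 1 w)
    (hvsupp : HasCompactSupport v) (hwsupp : HasCompactSupport w)
    (hdiv : ∀ x, divg v x = 0)
    (φ : (Fin d → ℝ) → ℝ) (R : ℝ → ℝ)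
    (hφ : ContDiff ℝ 1 φ) (hR : ContDiff ℝ 1 R) :
    (∫ x, R (φ x) * dot (Matrix.mulVec (jac v x) (v x)) (w x))
      = -(1/2) * (∫ x, deriv R (φ x) * dot (v x) (grad φ x) * dot (v x) (w x))
        - (1/2) * (∫ x, R (φ x) * dot (v x) (Matrix.mulVec (jac w x)ᵀ (v x)))
        + (1/2) * (∫ x, R (φ x) * dot (v x) (Matrix.mulVec (jac v x)ᵀ (w x))) :=
  convective_term_identity_general v w hv hw hvsupp hdiv φ R hφ hR
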